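/- Let Q be an inverse quantal frame and X a Q-sheaf. Then for all x, y ∈ X the inner product is computed by the formula ⟨x,y⟩ = ⋁_{u ∈ Q_I} u·ς_X(u*x ∧ y). -/

import Mathlib

/-- A unital involutive quantale: a complete lattice with an associative
multiplication preserving arbitrary joins in each variable, a unit `e`, and a
join-preserving involution. -/
structure IQuantale (Q : Type*) [CompleteLattice Q] where
  mul : Q → Q → Q
  e : Q
  star : Q → Q
  mul_assoc : ∀ a b c, mul (mul a b) c = mul a (mul b c)
  sSup_mul : ∀ (S : Set Q) (b : Q), mul (sSup S) b = ⨆ a ∈ S, mul a b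
  mul_sSup : ∀ (a : Q) (S : Set Q), mul a (sSup S) = ⨆ b ∈ S, mul a b
  e_mul : ∀ a, mul e a = a
  mul_e : ∀ a, mul a e = a
  star_star : ∀ a, star (star a) = a
  star_mul : ∀ a b, star (mul a b) = mul (star b) (star a)
  star_sSup : ∀ S : Set Q, star (sSup S) = ⨆ a ∈ S, star a

/-- The set of partial units of a quantale. -/
def IQuantale.PU {Q : Type*} [CompleteLattice Q] (Qs : IQuantale Q) : Set Q :=
  {s | Qs.mul s (Qs.star s) ≤ Qs.e ∧ Qs.mul (Qs.star s) s ≤ Qs.e}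

/-- An inverse quantal frame: a unital involutive quantale which is a frame,
has a stable support, and whose partial units join to the top. -/
structure InverseQuantalFrame (Q : Type*) [Order.Frame Q] extends toQuantale : IQuantale Q where
  supp : Q → Q
  supp_le_e : ∀ a, supp a ≤ e
  supp_sSup : ∀ S : Set Q, supp (sSup S) = ⨆ a ∈ S, supp a
  supp_le_mul_star : ∀ a, supp a ≤ mul a (star a)
  le_supp_mul : ∀ a, a ≤ mul (supp a) a
  supp_stable : ∀ b a, b ≤ e → supp (mul b a) = mul b (supp a)
  sSup_PU : sSup {s | mul s (star s) ≤ e ∧ mul (star s) s ≤ e} = ⊤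

/-- A left module over a quantale: a complete lattice with a unital associative
action preserving arbitrary joins in each variable. -/
structure QuantaleModule {Q : Type*} [CompleteLattice Q] (Qs : IQuantale Q)
    (X : Type*) [CompleteLattice X] where
  act : Q → X → X
  act_mul : ∀ a b x, act (Qs.mul a b) x = act a (act b x)
  act_e : ∀ x, act Qs.e x = x
  sSup_act : ∀ (S : Set Q) (x : X), act (sSup S) x = ⨆ a ∈ S, act a x
  act_sSup : ∀ (a : Q) (S : Set X), act a (sSup S) = ⨆ x ∈ S, act a x

/-- A pre-Hilbert module over a quantale. -/
structure PreHilbertModule {Q : Type*} [CompleteLattice Q] (Qs : IQuantale Q)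
    (X : Type*) [CompleteLattice X] extends QuantaleModule Qs X where
  inner : X → X → Q
  inner_act : ∀ a x y, inner (act a x) y = Qs.mul a (inner x y)
  sSup_inner : ∀ (S : Set X) (y : X), inner (sSup S) y = ⨆ x ∈ S, inner x y
  inner_star : ∀ x y, inner x y = Qs.star (inner y x)

namespace PreHilbertModule

variable {Q X : Type*} [CompleteLattice Q] [CompleteLattice X] {Qs : IQuantale Q}

/-- A Hilbert section: `⟨x,s⟩s ≤ x` for all `x`. -/
def IsHilbertSection (H : PreHilbertModule Qs X) (s : X) : Prop :=
  ∀ x, H.act (H.inner x s) s ≤ x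

/-- A regular element: `⟨s,s⟩s = s`. -/
def IsRegularSection (H : PreHilbertModule Qs X) (s : X) : Prop :=
  H.act (H.inner s s) s = s

/-- A Hilbert basis: `x = ⋁_{t ∈ S} ⟨x,t⟩t` for all `x`. -/
def IsHilbertBasis (H : PreHilbertModule Qs X) (S : Set X) : Prop :=
  ∀ x, x = ⨆ t ∈ S, H.act (H.inner x t) t

/-- Non-degeneracy of the inner product. -/
def Nondegenerate (H : PreHilbertModule Qs X) : Prop :=
  ∀ x y, (∀ z, H.inner x z = H.inner y z) → x = y

end PreHilbertModule

/-- A `Q`-locale over an inverse quantal frame: a module which is a frame and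
satisfies the anchor condition. -/
structure QLocale {Q : Type*} [Order.Frame Q] (Qf : InverseQuantalFrame Q)
    (X : Type*) [Order.Frame X] extends QuantaleModule Qf.toQuantale X where
  anchor : ∀ b x, b ≤ Qf.e → act b x = act b ⊤ ⊓ x

/-- A `Q`-sheaf over an inverse quantal frame: a pre-Hilbert module which is a
frame, satisfies the anchor condition, and has a Hilbert basis. -/
structure QSheaf {Q : Type*} [Order.Frame Q] (Qf : InverseQuantalFrame Q)
    (X : Type*) [Order.Frame X] extends PreHilbertModule Qf.toQuantale X where
  anchor : ∀ b x, b ≤ Qf.e → act b x = act b ⊤ ⊓ x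
  hasBasis : ∃ S : Set X, ∀ x, x = ⨆ t ∈ S, act (inner x t) t

namespace QSheaf

variable {Q X : Type*} [Order.Frame Q] [Order.Frame X] {Qf : InverseQuantalFrame Q}

/-- The support `ς_X(x) = ⟨x,x⟩ ∧ e` of a `Q`-sheaf. -/
def sppX (H : QSheaf Qf X) (x : X) : Q := H.inner x x ⊓ Qf.e

/-- A local section: `ς_X(x)s = x` for all `x ≤ s`. -/
def IsLocalSection (H : QSheaf Qf X) (s : X) : Prop :=
  ∀ x ≤ s, H.act (H.sppX x) s = x

/-- A principal section: a local section with `⟨s,s⟩ ≤ e`. -/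
def IsPrincipalSection (H : QSheaf Qf X) (s : X) : Prop :=
  H.IsLocalSection s ∧ H.inner s s ≤ Qf.e

/-- A right local section: `x = s ∧ 1_Q·x` for all `x ≤ s`. -/
def IsRightLocalSection (H : QSheaf Qf X) (s : X) : Prop :=
  ∀ x ≤ s, x = s ⊓ H.act ⊤ x

/-- A local bisection: simultaneously a local section and a right local section. -/
def IsBisection (H : QSheaf Qf X) (s : X) : Prop :=
  H.IsLocalSection s ∧ H.IsRightLocalSection s

end QSheaf

/-!
Expanding `z` in a Hilbert basis and splitting each coefficient along the partial units, which
join to `1`, writes `⟨z,y⟩ ∧ e` as a join of elements `h = a g d* ∧ e` with `a, d` partial units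
below `⟨z,t⟩`, `⟨y,t⟩` and `g = ς(t)`. Such an `h` is an idempotent self-adjoint element moving
`a t ≤ z` and `d t ≤ y` into each other, so `h ≤ ⟨h a t, h d t⟩ ≤ ⟨z ∧ y, z ∧ y⟩`. Applied to
`z = u* x`, this gives `v* v ≤ ς(u* x ∧ y)` for `v = u ∧ ⟨x,y⟩`, whence
`v ≤ v v* v ≤ u ς(u* x ∧ y)`; the reverse inequality only uses `u u* ≤ e`.
-/

section JoinPreserving

variable {α β : Type*} [CompleteLattice α] [CompleteLattice β] {f : α → β}

theorem monotone_of_map_sSup (hf : ∀ S, f (sSup S) = ⨆ a ∈ S, f a) : Monotone f :=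
  fun a b hab =>
    calc f a ≤ ⨆ x ∈ ({a, b} : Set α), f x := le_biSup f (by simp)
      _ = f b := by rw [← hf, sSup_pair, sup_eq_right.2 hab]

theorem map_iSup_of_map_sSup (hf : ∀ S, f (sSup S) = ⨆ a ∈ S, f a) {ι : Sort*} (g : ι → α) :
    f (⨆ i, g i) = ⨆ i, f (g i) := by
  rw [← sSup_range, hf, iSup_range]

end JoinPreserving

namespace IQuantale

variable {Q : Type*} [CompleteLattice Q] (Qs : IQuantale Q)

theorem iSup_mul {ι : Sort*} (f : ι → Q) (b : Q) : Qs.mul (⨆ i, f i) b = ⨆ i, Qs.mul (f i) b :=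
  map_iSup_of_map_sSup (f := (Qs.mul · b)) (Qs.sSup_mul · b) f

theorem mul_iSup {ι : Sort*} (a : Q) (f : ι → Q) : Qs.mul a (⨆ i, f i) = ⨆ i, Qs.mul a (f i) :=
  map_iSup_of_map_sSup (Qs.mul_sSup a) f

theorem star_iSup {ι : Sort*} (f : ι → Q) : Qs.star (⨆ i, f i) = ⨆ i, Qs.star (f i) :=
  map_iSup_of_map_sSup Qs.star_sSup f

variable {Qs}

theorem mul_le_mul {a b c d : Q} (hab : a ≤ b) (hcd : c ≤ d) : Qs.mul a c ≤ Qs.mul b d :=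
  (monotone_of_map_sSup (f := (Qs.mul · c)) (Qs.sSup_mul · c) hab).trans
    (monotone_of_map_sSup (Qs.mul_sSup b) hcd)

theorem star_le_star {a b : Q} (hab : a ≤ b) : Qs.star a ≤ Qs.star b :=
  monotone_of_map_sSup Qs.star_sSup hab

variable (Qs)

theorem star_e : Qs.star Qs.e = Qs.e :=
  calc Qs.star Qs.e = Qs.mul (Qs.star Qs.e) (Qs.star (Qs.star Qs.e)) := by
        rw [Qs.star_star, Qs.mul_e]
    _ = Qs.e := by rw [← Qs.star_mul, Qs.mul_e, Qs.star_star]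

variable {Qs}

theorem mem_PU_of_le {u v : Q} (hu : u ∈ Qs.PU) (hvu : v ≤ u) : v ∈ Qs.PU :=
  ⟨(mul_le_mul hvu (star_le_star hvu)).trans hu.1, (mul_le_mul (star_le_star hvu) hvu).trans hu.2⟩

end IQuantale

namespace InverseQuantalFrame

variable {Q : Type*} [Order.Frame Q] (Qf : InverseQuantalFrame Q)

open IQuantale

theorem supp_e : Qf.supp Qf.e = Qf.e :=
  le_antisymm (Qf.supp_le_e _) <|
    calc Qf.e ≤ Qf.mul (Qf.supp Qf.e) Qf.e := Qf.le_supp_mul _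
      _ = Qf.supp Qf.e := Qf.mul_e _

variable {Qf}

theorem supp_of_le_e {b : Q} (hb : b ≤ Qf.e) : Qf.supp b = b := by
  rw [← Qf.mul_e b, Qf.supp_stable b Qf.e hb, supp_e]

theorem mul_self_of_le_e {b : Q} (hb : b ≤ Qf.e) : Qf.mul b b = b :=
  le_antisymm ((mul_le_mul hb le_rfl).trans_eq (Qf.e_mul b)) <|
    calc b ≤ Qf.mul (Qf.supp b) b := Qf.le_supp_mul b
      _ = Qf.mul b b := by rw [supp_of_le_e hb]

theorem le_star_of_le_e {b : Q} (hb : b ≤ Qf.e) : b ≤ Qf.star b :=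
  calc b = Qf.supp b := (supp_of_le_e hb).symm
    _ ≤ Qf.mul b (Qf.star b) := Qf.supp_le_mul_star b
    _ ≤ Qf.mul Qf.e (Qf.star b) := mul_le_mul hb le_rfl
    _ = Qf.star b := Qf.e_mul _

theorem star_of_le_e {b : Q} (hb : b ≤ Qf.e) : Qf.star b = b := by
  have hsb : Qf.star b ≤ Qf.e := (star_le_star hb).trans_eq (star_e _)
  refine le_antisymm ?_ (le_star_of_le_e hb)
  simpa only [Qf.star_star] using le_star_of_le_e hsb

theorem le_mul_star_mul (a : Q) : a ≤ Qf.mul (Qf.mul a (Qf.star a)) a :=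
  (Qf.le_supp_mul a).trans (mul_le_mul (Qf.supp_le_mul_star a) le_rfl)

variable (Qf)

theorem iSup_PU_inf (a : Q) : ⨆ u ∈ Qf.toQuantale.PU, a ⊓ u = a := by
  rw [← inf_sSup_eq]
  exact inf_eq_left.2 (le_of_le_of_eq le_top Qf.sSup_PU.symm)

end InverseQuantalFrame

namespace PreHilbertModule

open IQuantale InverseQuantalFrame

section Quantale

variable {Q X : Type*} [CompleteLattice Q] [CompleteLattice X] {Qs : IQuantale Q}
  (H : PreHilbertModule Qs X)

theorem act_le_act {a b : Q} {x y : X} (hab : a ≤ b) (hxy : x ≤ y) : H.act a x ≤ H.act b y :=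
  (monotone_of_map_sSup (f := (H.act · x)) (H.sSup_act · x) hab).trans
    (monotone_of_map_sSup (H.act_sSup b) hxy)

theorem inner_act_right (a : Q) (x y : X) :
    H.inner x (H.act a y) = Qs.mul (H.inner x y) (Qs.star a) := by
  rw [H.inner_star, H.inner_act, Qs.star_mul, ← H.inner_star]

theorem inner_le_inner {x y z w : X} (hxz : x ≤ z) (hyw : y ≤ w) : H.inner x y ≤ H.inner z w := by
  have hleft : Monotone (H.inner · y) := monotone_of_map_sSup (H.sSup_inner · y)
  have hright : H.inner z y ≤ H.inner z w := by
    rw [H.inner_star z y, H.inner_star z w]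
    exact star_le_star (monotone_of_map_sSup (f := (H.inner · z)) (H.sSup_inner · z) hyw)
  exact (hleft hxz).trans hright

variable {H}

theorem IsHilbertBasis.inner_eq_iSup {S : Set X} (hS : H.IsHilbertBasis S) (x y : X) :
    H.inner x y = ⨆ t ∈ S, Qs.mul (H.inner x t) (H.inner t y) := by
  conv_lhs => rw [hS x]
  simp only [map_iSup_of_map_sSup (f := (H.inner · y)) (H.sSup_inner · y), H.inner_act]

theorem IsHilbertBasis.isHilbertSection {S : Set X} (hS : H.IsHilbertBasis S) {t : X}
    (ht : t ∈ S) : H.IsHilbertSection t := fun x =>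
  (le_biSup (fun t => H.act (H.inner x t) t) ht).trans_eq (hS x).symm

end Quantale

section InverseQuantalFrame

variable {Q X : Type*} [Order.Frame Q] [CompleteLattice X] {Qf : InverseQuantalFrame Q}
  {H : PreHilbertModule Qf.toQuantale X}

theorem IsHilbertBasis.act_inner_inf_e_self {S : Set X} (hS : H.IsHilbertBasis S) (x : X) :
    H.act (H.inner x x ⊓ Qf.e) x = x := by
  refine le_antisymm ((H.act_le_act inf_le_right le_rfl).trans_eq (H.act_e x)) ?_
  conv_lhs => rw [hS x]
  refine iSup₂_le fun t ht => ?_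
  have hsec : H.act (H.inner x t) t ≤ x := hS.isHilbertSection ht x
  -- `ς(⟨x,t⟩) ≤ ⟨x,t⟩⟨t,x⟩ = ⟨⟨x,t⟩t, x⟩ ≤ ⟨x,x⟩`
  have hsupp : Qf.supp (H.inner x t) ≤ H.inner x x ⊓ Qf.e := by
    refine le_inf ?_ (Qf.supp_le_e _)
    calc Qf.supp (H.inner x t) ≤ Qf.mul (H.inner x t) (Qf.star (H.inner x t)) :=
          Qf.supp_le_mul_star _
      _ = H.inner (H.act (H.inner x t) t) x := by rw [H.inner_act, ← H.inner_star]
      _ ≤ H.inner x x := H.inner_le_inner hsec le_rfl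
  calc H.act (H.inner x t) t
      ≤ H.act (Qf.mul (H.inner x x ⊓ Qf.e) (H.inner x t)) t :=
        H.act_le_act ((Qf.le_supp_mul _).trans (mul_le_mul hsupp le_rfl)) le_rfl
    _ = H.act (H.inner x x ⊓ Qf.e) (H.act (H.inner x t) t) := H.act_mul _ _ _
    _ ≤ H.act (H.inner x x ⊓ Qf.e) x := H.act_le_act le_rfl hsec

variable (H)

theorem inf_e_le_inner_act_inf_act {a d g : Q} (t : X) (ha : a ∈ Qf.toQuantale.PU)
    (hd : d ∈ Qf.toQuantale.PU) (hge : g ≤ Qf.e) (hgt : g ≤ H.inner t t) :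
    Qf.mul (Qf.mul a g) (Qf.star d) ⊓ Qf.e ≤
      H.inner (H.act a t ⊓ H.act d t) (H.act a t ⊓ H.act d t) := by
  set h := Qf.mul (Qf.mul a g) (Qf.star d) ⊓ Qf.e
  have hhe : h ≤ Qf.e := inf_le_right
  have hstar : Qf.star h = h := star_of_le_e hhe
  have hidem : Qf.mul h h = h := mul_self_of_le_e hhe
  have hle_e : ∀ {b c : Q}, b ≤ Qf.e → c ≤ Qf.e → Qf.mul b c ≤ Qf.e := fun hb hc =>
    (mul_le_mul hb hc).trans_eq (Qf.mul_e _)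
  have hmul_e : ∀ {b c : Q}, c ≤ Qf.e → Qf.mul b c ≤ b := fun hc =>
    (mul_le_mul le_rfl hc).trans_eq (Qf.mul_e _)
  have hha : Qf.mul h a ≤ d :=
    calc Qf.mul h a = Qf.mul (Qf.star h) a := by rw [hstar]
      _ ≤ Qf.mul (Qf.star (Qf.mul (Qf.mul a g) (Qf.star d))) a :=
        mul_le_mul (star_le_star inf_le_left) le_rfl
      _ = Qf.mul d (Qf.mul (Qf.star g) (Qf.mul (Qf.star a) a)) := by
        simp only [Qf.star_mul, Qf.star_star, Qf.mul_assoc]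
      _ ≤ d := hmul_e (hle_e ((star_of_le_e hge).trans_le hge) ha.2)
  have hhd : Qf.mul h d ≤ a :=
    calc Qf.mul h d ≤ Qf.mul (Qf.mul (Qf.mul a g) (Qf.star d)) d := mul_le_mul inf_le_left le_rfl
      _ = Qf.mul a (Qf.mul g (Qf.mul (Qf.star d) d)) := by simp only [Qf.mul_assoc]
      _ ≤ a := hmul_e (hle_e hge hd.2)
  have hlow : ∀ {b c : Q}, Qf.mul h b ≤ c → H.act h (H.act b t) ≤ H.act b t ⊓ H.act c t :=
    fun hbc => le_inf ((H.act_le_act hhe le_rfl).trans_eq (H.act_e _))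
      ((H.act_mul _ _ _).symm.trans_le (H.act_le_act hbc le_rfl))
  -- `h = h h h ≤ h (a g d*) h ≤ h a ⟨t,t⟩ d* h = ⟨h a t, h d t⟩`
  have hinner : h ≤ H.inner (H.act h (H.act a t)) (H.act h (H.act d t)) :=
    calc h = Qf.mul h (Qf.mul h h) := by rw [hidem, hidem]
      _ ≤ Qf.mul h (Qf.mul (Qf.mul (Qf.mul a (H.inner t t)) (Qf.star d)) h) :=
        mul_le_mul le_rfl (mul_le_mul
          (inf_le_left.trans (mul_le_mul (mul_le_mul le_rfl hgt) le_rfl)) le_rfl)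
      _ = H.inner (H.act h (H.act a t)) (H.act h (H.act d t)) := by
        simp only [H.inner_act, inner_act_right, hstar, Qf.mul_assoc]
  exact hinner.trans (H.inner_le_inner (hlow hha) (by rw [inf_comm]; exact hlow hhd))

variable {H}

theorem IsHilbertBasis.inner_inf_e_le_inner_inf {S : Set X} (hS : H.IsHilbertBasis S) (z y : X) :
    H.inner z y ⊓ Qf.e ≤ H.inner (z ⊓ y) (z ⊓ y) := by
  rw [hS.inner_eq_iSup, iSup₂_inf_eq]
  refine iSup₂_le fun t ht => ?_
  set g := H.inner t t ⊓ Qf.e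
  have hzt : H.inner z t = Qf.mul (H.inner z t) g := by
    conv_lhs => rw [← hS.act_inner_inf_e_self t]
    rw [inner_act_right, star_of_le_e inf_le_right]
  have hsplit : Qf.mul (H.inner z t) (H.inner t y) =
      ⨆ v ∈ Qf.toQuantale.PU, ⨆ u ∈ Qf.toQuantale.PU,
        Qf.mul (Qf.mul (H.inner z t ⊓ u) g) (Qf.star (H.inner y t ⊓ v)) := by
    calc Qf.mul (H.inner z t) (H.inner t y)
        = Qf.mul (Qf.mul (H.inner z t) g) (Qf.star (H.inner y t)) := by rw [← hzt, ← H.inner_star]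
      _ = Qf.mul (Qf.mul (⨆ u ∈ Qf.toQuantale.PU, H.inner z t ⊓ u) g)
            (Qf.star (⨆ v ∈ Qf.toQuantale.PU, H.inner y t ⊓ v)) := by
          rw [Qf.iSup_PU_inf, Qf.iSup_PU_inf]
      _ = _ := by simp only [iSup_mul, mul_iSup, star_iSup]
  rw [hsplit]
  simp only [iSup_inf_eq]
  refine iSup₂_le fun v hv => iSup₂_le fun u hu => ?_
  have hsec := hS.isHilbertSection ht
  have hbound : H.act (H.inner z t ⊓ u) t ⊓ H.act (H.inner y t ⊓ v) t ≤ z ⊓ y :=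
    inf_le_inf ((H.act_le_act inf_le_left le_rfl).trans (hsec z))
      ((H.act_le_act inf_le_left le_rfl).trans (hsec y))
  exact (H.inf_e_le_inner_act_inf_act t (mem_PU_of_le hu inf_le_right)
    (mem_PU_of_le hv inf_le_right) inf_le_right inf_le_left).trans (H.inner_le_inner hbound hbound)

end InverseQuantalFrame

end PreHilbertModule

open IQuantale InverseQuantalFrame PreHilbertModule in
/-- In a `Q`-sheaf, the inner product is computed by
`⟨x,y⟩ = ⋁_{u ∈ Q_I} u·ς_X(u*x ∧ y)`. -/
theorem stmt7 {Q X : Type*} [Order.Frame Q] [Order.Frame X]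
    (Qf : InverseQuantalFrame Q) (H : QSheaf Qf X) (x y : X) :
    H.inner x y =
      ⨆ u ∈ Qf.toQuantale.PU, Qf.mul u (H.sppX (H.act (Qf.star u) x ⊓ y)) := by
  obtain ⟨S, hS⟩ := H.hasBasis
  refine le_antisymm ?_ (iSup₂_le fun u hu => ?_)
  · conv_lhs => rw [← Qf.iSup_PU_inf (H.inner x y)]
    refine iSup₂_mono fun u hu => ?_
    set v := H.inner x y ⊓ u
    have hvu : v ≤ u := inf_le_right
    have hvv : Qf.mul (Qf.star v) v ≤ H.sppX (H.act (Qf.star u) x ⊓ y) := by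
      have hve : Qf.mul (Qf.star v) v ≤ Qf.e := (mem_PU_of_le hu hvu).2
      have hle : Qf.mul (Qf.star v) v ≤ H.inner (H.act (Qf.star u) x) y :=
        (mul_le_mul (star_le_star hvu) inf_le_left).trans_eq (H.inner_act _ _ _).symm
      exact le_inf ((le_inf hle hve).trans (IsHilbertBasis.inner_inf_e_le_inner_inf hS _ _)) hve
    calc v ≤ Qf.mul (Qf.mul v (Qf.star v)) v := le_mul_star_mul v
      _ = Qf.mul v (Qf.mul (Qf.star v) v) := Qf.mul_assoc _ _ _
      _ ≤ _ := mul_le_mul hvu hvv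
  · calc Qf.mul u (H.sppX (H.act (Qf.star u) x ⊓ y))
        ≤ Qf.mul u (H.inner (H.act (Qf.star u) x) y) :=
          mul_le_mul le_rfl (inf_le_left.trans (H.inner_le_inner inf_le_left inf_le_right))
      _ = Qf.mul (Qf.mul u (Qf.star u)) (H.inner x y) := by rw [H.inner_act, Qf.mul_assoc]
      _ ≤ H.inner x y := (mul_le_mul hu.1 le_rfl).trans_eq (Qf.e_mul _)
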